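/- arXiv:2508.18854 — 2 statements merged into one kernel-verified Lean document; each statement's English description precedes it below -/
import Mathlib

section
/- Under the hypotheses of the information-form update (P, R symmetric positive definite, S = H P Hᵀ + R, K = P Hᵀ S⁻¹), the gain satisfies K = (P⁻¹ + Hᵀ R⁻¹ H)⁻¹ Hᵀ R⁻¹. -/
/-!
Both sides of `(P⁻¹ + Hᵀ R⁻¹ H) P Hᵀ = Hᵀ R⁻¹ (H P Hᵀ + R)` expand to `Hᵀ + Hᵀ R⁻¹ H P Hᵀ`;
the two bracketed matrices are positive definite, hence invertible, and can be moved across.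
-/

open Matrix

namespace Matrix

variable {m n α : Type*} [Fintype m] [DecidableEq m] [Fintype n] [DecidableEq n] [CommRing α]

theorem mul_mul_inv_mul_mul_add_eq (A : Matrix m m α) (U : Matrix m n α) (C : Matrix n n α)
    (V : Matrix n m α) (hA : IsUnit A.det) (hC : IsUnit C.det) (hS : IsUnit (V * A * U + C).det)
    (hT : IsUnit (A⁻¹ + U * C⁻¹ * V).det) :
    A * U * (V * A * U + C)⁻¹ = (A⁻¹ + U * C⁻¹ * V)⁻¹ * U * C⁻¹ := by
  have push_through : (A⁻¹ + U * C⁻¹ * V) * (A * U) = U * C⁻¹ * (V * A * U + C) := by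
    rw [Matrix.add_mul, Matrix.mul_add, nonsing_inv_mul_cancel_left _ _ hA,
      nonsing_inv_mul_cancel_right _ _ hC, add_comm]
    simp only [Matrix.mul_assoc]
  calc A * U * (V * A * U + C)⁻¹
      = (A⁻¹ + U * C⁻¹ * V)⁻¹ * ((A⁻¹ + U * C⁻¹ * V) * (A * U)) * (V * A * U + C)⁻¹ := by
        rw [nonsing_inv_mul_cancel_left _ _ hT]
    _ = (A⁻¹ + U * C⁻¹ * V)⁻¹ * U * C⁻¹ := by
        rw [push_through, Matrix.mul_assoc _ _ (V * A * U + C)⁻¹,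
          mul_nonsing_inv_cancel_right _ _ hS, Matrix.mul_assoc, Matrix.mul_assoc]

end Matrix

/-- The Kalman gain `K = P Hᵀ S⁻¹` with `S = H P Hᵀ + R` satisfies
`K = (P⁻¹ + Hᵀ R⁻¹ H)⁻¹ Hᵀ R⁻¹` when `P` and `R` are symmetric positive definite. -/
theorem kalman_gain_information_form {m nt : ℕ}
    (P : Matrix (Fin m) (Fin m) ℝ)
    (R : Matrix (Fin nt) (Fin nt) ℝ)
    (H : Matrix (Fin nt) (Fin m) ℝ)
    (hP : P.PosDef) (hR : R.PosDef) :
    P * Hᵀ * (H * P * Hᵀ + R)⁻¹ = (P⁻¹ + Hᵀ * R⁻¹ * H)⁻¹ * Hᵀ * R⁻¹ := by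
  have hS : (H * P * Hᵀ + R).PosDef := by
    simpa only [conjTranspose_eq_transpose_of_trivial] using
      PosDef.posSemidef_add (hP.posSemidef.mul_mul_conjTranspose_same H) hR
  have hT : (P⁻¹ + Hᵀ * R⁻¹ * H).PosDef := by
    simpa only [conjTranspose_eq_transpose_of_trivial, transpose_transpose] using
      hP.inv.add_posSemidef (hR.inv.posSemidef.mul_mul_conjTranspose_same Hᵀ)
  exact mul_mul_inv_mul_mul_add_eq P Hᵀ R H hP.det_pos.ne'.isUnit hR.det_pos.ne'.isUnit
    hS.det_pos.ne'.isUnit hT.det_pos.ne'.isUnit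
end

section
/- Decentralized fusion with CCMN equals centralized fusion (covariance part): under the assumptions that each Jacobian block ∇h_j = C_j T_j with T_j having rank ≥ n_j and ∇h_j full row rank, the global posterior information P_{k|k}⁻¹ = P_{k|k-1}⁻¹ + Σ_j M_j T_jᵀ Î_j T_j with M_j = ∇hᵀ R⁻¹(*j) R_j (∇h_j†)ᵀ and Î_j = C_jᵀ R_j⁻¹ C_j equals P_{k|k-1}⁻¹ + ∇hᵀ R⁻¹ ∇h. -/
/-!
Because `∇h_j = C_j T_j`, each local information matrix pulled back along `T_j` is
`T_jᵀ Î_j T_j = ∇h_jᵀ R_j⁻¹ ∇h_j`. Full row rank makes `∇h_j†` a right inverse of `∇h_j`, so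
`M_j` cancels `R_j⁻¹` and `∇h_jᵀ`, leaving `∇hᵀ R⁻¹(*j) ∇h_j`. Summing these over the blocks
is block multiplication: `Σ_j R⁻¹(*j) ∇h_j = R⁻¹ ∇h`.
-/

open Matrix

/-- `Ad` is the Moore–Penrose pseudo-inverse of `A`. -/
def IsMoorePenrose {n m : Type*} [Fintype n] [Fintype m]
    (A : Matrix n m ℝ) (Ad : Matrix m n ℝ) : Prop :=
  A * Ad * A = A ∧ Ad * A * Ad = Ad ∧ (A * Ad)ᵀ = A * Ad ∧ (Ad * A)ᵀ = Ad * A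

/-- The `j`-th column block of a matrix with columns indexed by `(j : Fin N) × Fin (n j)`. -/
def colBlock {N : ℕ} {n : Fin N → ℕ} {I : Type*}
    (M : Matrix I ((j : Fin N) × Fin (n j)) ℝ) (j : Fin N) :
    Matrix I (Fin (n j)) ℝ :=
  fun a b => M a ⟨j, b⟩

/-- The vertical stack of matrices `B j : ℝ^{n_j × m}`. -/
def vstack {N m : ℕ} {n : Fin N → ℕ}
    (B : (j : Fin N) → Matrix (Fin (n j)) (Fin m) ℝ) :
    Matrix ((j : Fin N) × Fin (n j)) (Fin m) ℝ :=
  fun a c => B a.1 a.2 c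

theorem Matrix.exists_mul_eq_one_of_rank_eq_card {K m n : Type*} [Field K] [Fintype m]
    [DecidableEq m] [Fintype n] {A : Matrix m n K} (h : A.rank = Fintype.card m) :
    ∃ B : Matrix n m K, A * B = 1 := by
  rw [← mulVec_surjective_iff_exists_right_inverse, ← coe_mulVecLin, ← LinearMap.range_eq_top]
  apply Submodule.eq_top_of_finrank_eq
  rw [← rank, h, Module.finrank_fintype_fun_eq_card]

theorem Matrix.mul_eq_one_of_mul_mul_eq_self_of_rank_eq_card {K m n : Type*} [Field K]
    [Fintype m] [DecidableEq m] [Fintype n] {A : Matrix m n K} {G : Matrix n m K}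
    (hG : A * G * A = A) (h : A.rank = Fintype.card m) : A * G = 1 := by
  obtain ⟨B, hB⟩ := exists_mul_eq_one_of_rank_eq_card h
  simpa [Matrix.mul_assoc, hB] using congrArg (· * B) hG

theorem Matrix.transpose_mul_mul_mul_eq_of_mul_eq {R k l p : Type*} [CommSemiring R]
    [Fintype k] [Fintype l] {C : Matrix k l R} {T : Matrix l p R} {A : Matrix k p R}
    (hCT : C * T = A) (W : Matrix k k R) : Tᵀ * (Cᵀ * W * C) * T = Aᵀ * W * A := by
  rw [← hCT, transpose_mul]
  simp only [Matrix.mul_assoc]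

theorem Matrix.mul_mul_transpose_mul_transpose_mul_inv_mul {R k l p : Type*} [CommRing R]
    [Fintype k] [DecidableEq k] [Fintype l] {A : Matrix k l R} {G : Matrix l k R}
    (hAG : A * G = 1) {W : Matrix k k R} (hW : IsUnit W.det) (X : Matrix p k R) :
    X * W * Gᵀ * (Aᵀ * W⁻¹ * A) = X * A := by
  have hGA : Gᵀ * Aᵀ = 1 := by rw [← transpose_mul, hAG, transpose_one]
  calc X * W * Gᵀ * (Aᵀ * W⁻¹ * A) = X * (W * (Gᵀ * Aᵀ) * W⁻¹) * A := by
        simp only [Matrix.mul_assoc]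
    _ = X * A := by rw [hGA, Matrix.mul_one, mul_nonsing_inv _ hW, Matrix.mul_one]

theorem sum_colBlock_mul_eq_mul_vstack {N m : ℕ} {n : Fin N → ℕ} {I : Type*} [Fintype I]
    (A : Matrix I ((j : Fin N) × Fin (n j)) ℝ)
    (B : (j : Fin N) → Matrix (Fin (n j)) (Fin m) ℝ) :
    ∑ j : Fin N, colBlock A j * B j = A * vstack B := by
  ext a c
  rw [Matrix.sum_apply, mul_apply, ← Finset.univ_sigma_univ, Finset.sum_sigma]
  exact Finset.sum_congr rfl fun j _ => by rw [mul_apply]; rfl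

theorem decentralized_ccmn_fusion_covariance_eq_centralized_general
    {N m : ℕ} {n mj : Fin N → ℕ}
    (H : (j : Fin N) → Matrix (Fin (n j)) (Fin m) ℝ)
    (Hd : (j : Fin N) → Matrix (Fin m) (Fin (n j)) ℝ)
    (hHMP : ∀ j, IsMoorePenrose (H j) (Hd j))
    (hrank : ∀ j, (H j).rank = n j)
    (T : (j : Fin N) → Matrix (Fin (mj j)) (Fin m) ℝ)
    (Td : (j : Fin N) → Matrix (Fin m) (Fin (mj j)) ℝ)
    (hfact : ∀ j, (H j * Td j) * T j = H j)
    (Rj : (j : Fin N) → Matrix (Fin (n j)) (Fin (n j)) ℝ)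
    (hRj : ∀ j, IsUnit (Rj j).det)
    (R : Matrix ((j : Fin N) × Fin (n j)) ((j : Fin N) × Fin (n j)) ℝ)
    (Pinv : Matrix (Fin m) (Fin m) ℝ) :
    Pinv + ∑ j : Fin N,
        ((vstack H)ᵀ * colBlock R⁻¹ j * Rj j * (Hd j)ᵀ) *
          ((T j)ᵀ * ((H j * Td j)ᵀ * (Rj j)⁻¹ * (H j * Td j)) * T j) =
      Pinv + (vstack H)ᵀ * R⁻¹ * vstack H := by
  have hterm : ∀ j, ((vstack H)ᵀ * colBlock R⁻¹ j * Rj j * (Hd j)ᵀ) *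
      ((T j)ᵀ * ((H j * Td j)ᵀ * (Rj j)⁻¹ * (H j * Td j)) * T j) =
      (vstack H)ᵀ * (colBlock R⁻¹ j * H j) := fun j => by
    have hHHd : H j * Hd j = 1 :=
      mul_eq_one_of_mul_mul_eq_self_of_rank_eq_card (hHMP j).1 (by rw [hrank j, Fintype.card_fin])
    rw [transpose_mul_mul_mul_eq_of_mul_eq (hfact j),
      mul_mul_transpose_mul_transpose_mul_inv_mul hHHd (hRj j), Matrix.mul_assoc]
  rw [Finset.sum_congr rfl fun j _ => hterm j, ← Matrix.mul_sum, sum_colBlock_mul_eq_mul_vstack,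
    Matrix.mul_assoc]

/-- Decentralized fusion with cross-correlated measurement noises equals the
centralized fusion (covariance part):
`P⁻¹ + Σ_j M_j T_jᵀ Î_j T_j = P⁻¹ + ∇hᵀ R⁻¹ ∇h`, where
`M_j = ∇hᵀ R⁻¹(*j) R_j (∇h_j†)ᵀ`, `C_j = ∇h_j T_j†` and `Î_j = C_jᵀ R_j⁻¹ C_j`. -/
theorem decentralized_ccmn_fusion_covariance_eq_centralized
    {N m : ℕ} {n mj : Fin N → ℕ}
    (H : (j : Fin N) → Matrix (Fin (n j)) (Fin m) ℝ)
    (Hd : (j : Fin N) → Matrix (Fin m) (Fin (n j)) ℝ)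
    (hHMP : ∀ j, IsMoorePenrose (H j) (Hd j))
    (hrank : ∀ j, (H j).rank = n j)
    (T : (j : Fin N) → Matrix (Fin (mj j)) (Fin m) ℝ)
    (Td : (j : Fin N) → Matrix (Fin m) (Fin (mj j)) ℝ)
    (hTMP : ∀ j, IsMoorePenrose (T j) (Td j))
    (hTrank : ∀ j, (n j : ℕ) ≤ (T j).rank)
    (hfact : ∀ j, (H j * Td j) * T j = H j)
    (Rj : (j : Fin N) → Matrix (Fin (n j)) (Fin (n j)) ℝ)
    (hRj : ∀ j, IsUnit (Rj j).det)
    (R : Matrix ((j : Fin N) × Fin (n j)) ((j : Fin N) × Fin (n j)) ℝ)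
    (hR : IsUnit R.det)
    (Pinv : Matrix (Fin m) (Fin m) ℝ) :
    Pinv + ∑ j : Fin N,
        ((vstack H)ᵀ * colBlock R⁻¹ j * Rj j * (Hd j)ᵀ) *
          ((T j)ᵀ * ((H j * Td j)ᵀ * (Rj j)⁻¹ * (H j * Td j)) * T j) =
      Pinv + (vstack H)ᵀ * R⁻¹ * vstack H :=
  decentralized_ccmn_fusion_covariance_eq_centralized_general H Hd hHMP hrank T Td hfact Rj hRj R
    Pinv
end
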